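/- Fix r ∈ (0,1), λ ∈ (2r-1, 1) with λ > 0, and η > 0. For each m set ε_m := ε_m(λ,η,r). Then μ_m(λ − ε_m) ~ μ_m(λ) as m → ∞, and σ_m(λ − ε_m) ~ sqrt(μ_m(λ)) ~ sqrt(((1+λ)²/(2π·h_m²·sqrt(1-λ²)))·exp(-h_m²/(1+λ))) as m → ∞. -/

import Mathlib

open MeasureTheory ProbabilityTheory Filter Topology

noncomputable section

/-- Centered bivariate Gaussian pair `(w, v)` in which `w` and `v` are each standard
normal and `E[w v] = lam`, realized as the law of `(z₁, lam·z₁ + √(1-lam²)·z₂)`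
for independent standard normals `z₁, z₂`. -/
def gaussPair (lam : ℝ) : Measure (ℝ × ℝ) :=
  Measure.map (fun z : ℝ × ℝ => (z.1, lam * z.1 + Real.sqrt (1 - lam ^ 2) * z.2))
    ((gaussianReal 0 1).prod (gaussianReal 0 1))

/-- `μ(λ,h) = P(w ≥ h ∧ v ≥ h)`. -/
def mu (lam h : ℝ) : ℝ := (gaussPair lam {p : ℝ × ℝ | h ≤ p.1 ∧ h ≤ p.2}).toReal

/-- `σ(λ,h) = sqrt(μ(λ,h)(1-μ(λ,h)))`. -/
def sigma' (lam h : ℝ) : ℝ := Real.sqrt (mu lam h * (1 - mu lam h))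

/-- The threshold `h_m = sqrt(2 r log m)`. -/
def hthr (r : ℝ) (m : ℕ) : ℝ := Real.sqrt (2 * r * Real.log m)

/-- `μ_m(λ) = μ(λ, h_m)`. -/
def muM (r : ℝ) (m : ℕ) (lam : ℝ) : ℝ := mu lam (hthr r m)

/-- `σ_m(λ) = σ(λ, h_m)`. -/
def sigM (r : ℝ) (m : ℕ) (lam : ℝ) : ℝ := sigma' lam (hthr r m)

/-- Canonical probability space carrying `m` i.i.d. random vectors in `ℝ^d`
whose coordinates are i.i.d. standard normal: `a_i ω := ω i`. -/
def Prob (d m : ℕ) : Measure (Fin m → Fin d → ℝ) :=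
  Measure.pi fun _ => Measure.pi fun _ : Fin d => gaussianReal 0 1

/-- Euclidean inner product on `ℝ^d`. -/
def dotp {d : ℕ} (a x : Fin d → ℝ) : ℝ := ∑ j, a j * x j

/-- `x` lies on the unit sphere `S^{d-1}`. -/
def unitVec {d : ℕ} (x : Fin d → ℝ) : Prop := ∑ j, x j ^ 2 = 1

/-- The score `S_m(x,y) = (1/m) ∑_i 1[⟨a_i,x⟩ ≥ h_m]·1[⟨a_i,y⟩ ≥ h_m]`. -/
def score (d m : ℕ) (r : ℝ) (x y : Fin d → ℝ) (ω : Fin m → Fin d → ℝ) : ℝ :=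
  (1 / (m : ℝ)) * ∑ i, (if hthr r m ≤ dotp (ω i) x then (1 : ℝ) else 0) *
    (if hthr r m ≤ dotp (ω i) y then (1 : ℝ) else 0)

/-- The standard normal cumulative distribution function `Φ`. -/
def Phi (t : ℝ) : ℝ := (gaussianReal 0 1 (Set.Iic t)).toReal

/-- The standard normal upper tail `P(N(0,1) ≥ t)`. -/
def gaussTail (t : ℝ) : ℝ := (gaussianReal 0 1 {z : ℝ | t ≤ z}).toReal

/-- `ε_m(λ,η,r) = C(λ,r,m,η)·m^{-(λ-(2r-1))/(2(1+λ))}` with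
`C = √(2π)·(1+λ)·(1-λ²)^{1/4}·η/√(2r log m)`. -/
def epsm (r lam eta : ℝ) (m : ℕ) : ℝ :=
  (Real.sqrt (2 * Real.pi) * (1 + lam) * (1 - lam ^ 2) ^ ((1 : ℝ) / 4) * eta /
    Real.sqrt (2 * r * Real.log m)) * (m : ℝ) ^ (-(lam - (2 * r - 1)) / (2 * (1 + lam)))

section AuxStmt19
open Set Real

/-- tail of the conditional gaussian -/
def tailT (lam h x : ℝ) : ℝ :=
  ((gaussianReal 0 1) (Ici ((h - lam * x) / Real.sqrt (1 - lam ^ 2)))).toReal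

lemma mu_nonneg (lam h : ℝ) : 0 ≤ mu lam h := ENNReal.toReal_nonneg

lemma tailT_nonneg (lam h x : ℝ) : 0 ≤ tailT lam h x := ENNReal.toReal_nonneg

lemma tailT_le_one (lam h x : ℝ) : tailT lam h x ≤ 1 := by
  rw [tailT]
  have := prob_le_one (μ := gaussianReal 0 1) (s := Ici ((h - lam * x) / Real.sqrt (1 - lam ^ 2)))
  exact ENNReal.toReal_le_of_le_ofReal zero_le_one (by simpa using this)

lemma tailT_monotone {lam : ℝ} (hl : 0 < lam) (h : ℝ) : Monotone (tailT lam h) := by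
  intro x y hxy
  apply ENNReal.toReal_mono (measure_ne_top _ _)
  apply measure_mono
  apply Ici_subset_Ici.2
  apply div_le_div_of_nonneg_right ?_ (Real.sqrt_nonneg _)
  nlinarith [mul_le_mul_of_nonneg_left hxy hl.le]

lemma tailT_measurable {lam : ℝ} (hl : 0 < lam) (h : ℝ) : Measurable (tailT lam h) :=
  (tailT_monotone hl h).measurable

lemma integrableOn_pdf_mul_tailT {lam : ℝ} (hl : 0 < lam) (h : ℝ) (s : Set ℝ) :
    IntegrableOn (fun x => gaussianPDFReal 0 1 x * tailT lam h x) s := by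
  apply IntegrableOn.mono_set (t := Set.univ) ?_ (subset_univ s)
  rw [integrableOn_univ]
  apply (integrable_gaussianPDFReal 0 1).mono'
  · exact ((measurable_gaussianPDFReal 0 1).mul (tailT_measurable hl h)).aestronglyMeasurable
  · refine ae_of_all _ fun x => ?_
    rw [Real.norm_eq_abs, abs_of_nonneg (mul_nonneg (gaussianPDFReal_nonneg 0 1 x) (tailT_nonneg lam h x))]
    calc gaussianPDFReal 0 1 x * tailT lam h x ≤ gaussianPDFReal 0 1 x * 1 := by
          exact mul_le_mul_of_nonneg_left (tailT_le_one lam h x) (gaussianPDFReal_nonneg 0 1 x)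
      _ = _ := mul_one _

lemma mu_eq_integral {lam : ℝ} (hl0 : 0 < lam) (hl1 : lam < 1) (h : ℝ) :
    mu lam h = ∫ x in Ici h, gaussianPDFReal 0 1 x * tailT lam h x := by
  have hc2 : (0:ℝ) < 1 - lam ^ 2 := by nlinarith
  have hc : 0 < Real.sqrt (1 - lam ^ 2) := Real.sqrt_pos.2 hc2
  set c := Real.sqrt (1 - lam ^ 2) with hcdef
  have hf : Measurable (fun z : ℝ × ℝ => (z.1, lam * z.1 + c * z.2)) :=
    measurable_fst.prodMk ((measurable_fst.const_mul lam).add (measurable_snd.const_mul c))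
  have hSeq : {p : ℝ × ℝ | h ≤ p.1 ∧ h ≤ p.2} = (Ici h) ×ˢ (Ici h) := rfl
  have hS : MeasurableSet {p : ℝ × ℝ | h ≤ p.1 ∧ h ≤ p.2} := by
    rw [hSeq]; exact measurableSet_Ici.prod measurableSet_Ici
  have hA : MeasurableSet {z : ℝ × ℝ | h ≤ z.1 ∧ h ≤ lam * z.1 + c * z.2} := by
    apply MeasurableSet.inter
    · exact measurableSet_le measurable_const measurable_fst
    · exact measurableSet_le measurable_const
        ((measurable_fst.const_mul lam).add (measurable_snd.const_mul c))
  rw [mu, gaussPair, Measure.map_apply hf hS]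
  have hpre : (fun z : ℝ × ℝ => (z.1, lam * z.1 + c * z.2)) ⁻¹' {p : ℝ × ℝ | h ≤ p.1 ∧ h ≤ p.2}
      = {z : ℝ × ℝ | h ≤ z.1 ∧ h ≤ lam * z.1 + c * z.2} := rfl
  rw [hpre, Measure.prod_apply hA]
  have hsec : ∀ x : ℝ, (gaussianReal 0 1)
      (Prod.mk x ⁻¹' {z : ℝ × ℝ | h ≤ z.1 ∧ h ≤ lam * z.1 + c * z.2})
      = (Ici h).indicator (fun x => ENNReal.ofReal (tailT lam h x)) x := by
    intro x
    by_cases hx : h ≤ x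
    · have : Prod.mk x ⁻¹' {z : ℝ × ℝ | h ≤ z.1 ∧ h ≤ lam * z.1 + c * z.2}
          = Ici ((h - lam * x) / c) := by
        ext y
        simp only [mem_preimage, mem_setOf_eq, mem_Ici, hx, true_and]
        rw [div_le_iff₀ hc]
        constructor <;> intro hy <;> nlinarith
      rw [this, indicator_of_mem (mem_Ici.2 hx), tailT, ENNReal.ofReal_toReal (measure_ne_top _ _)]
    · have : Prod.mk x ⁻¹' {z : ℝ × ℝ | h ≤ z.1 ∧ h ≤ lam * z.1 + c * z.2} = ∅ := by
        ext y; simp [hx]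
      rw [this, indicator_of_notMem (by simpa using hx)]
      simp
  rw [lintegral_congr hsec, lintegral_indicator measurableSet_Ici _]
  have hγ : gaussianReal 0 1 = volume.withDensity (gaussianPDF 0 1) :=
    gaussianReal_of_var_ne_zero 0 one_ne_zero
  have htm : Measurable fun x => ENNReal.ofReal (tailT lam h x) :=
    (tailT_measurable hl0 h).ennreal_ofReal
  rw [hγ, restrict_withDensity measurableSet_Ici,
    lintegral_withDensity_eq_lintegral_mul _ (measurable_gaussianPDF 0 1) htm]
  have heq : (fun x => gaussianPDF 0 1 x * ENNReal.ofReal (tailT lam h x))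
      = fun x => ENNReal.ofReal (gaussianPDFReal 0 1 x * tailT lam h x) := by
    ext x
    rw [gaussianPDF, ← ENNReal.ofReal_mul (gaussianPDFReal_nonneg 0 1 x)]
  rw [Pi.mul_def, heq, ← ofReal_integral_eq_lintegral_ofReal
    (integrableOn_pdf_mul_tailT hl0 h (Ici h))
    (ae_of_all _ fun x => mul_nonneg (gaussianPDFReal_nonneg 0 1 x) (tailT_nonneg lam h x)),
    ENNReal.toReal_ofReal (integral_nonneg fun x =>
      mul_nonneg (gaussianPDFReal_nonneg 0 1 x) (tailT_nonneg lam h x))]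

lemma tailT_eq_integral {lam : ℝ} (hl0 : 0 < lam) (hl1 : lam < 1) (h x : ℝ) :
    tailT lam h x = ∫ v in Ici h, gaussianPDFReal (lam * x) (Real.toNNReal (1 - lam ^ 2)) v := by
  have hc2 : (0:ℝ) < 1 - lam ^ 2 := by nlinarith
  have hc : 0 < Real.sqrt (1 - lam ^ 2) := Real.sqrt_pos.2 hc2
  set c := Real.sqrt (1 - lam ^ 2) with hcdef
  have hv0 : Real.toNNReal (1 - lam ^ 2) ≠ 0 :=
    fun hh => absurd (Real.toNNReal_eq_zero.1 hh) (not_le.2 hc2)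
  have hvar : (NNReal.mk (c ^ 2) (sq_nonneg _)) * 1 = Real.toNNReal (1 - lam ^ 2) := by
    ext
    simp [hcdef, Real.sq_sqrt hc2.le, Real.coe_toNNReal _ hc2.le]
  have hmap : gaussianReal (lam * x) (Real.toNNReal (1 - lam ^ 2))
      = ((gaussianReal 0 1).map (c * ·)).map (· + lam * x) := by
    rw [gaussianReal_map_const_mul c, hvar, gaussianReal_map_add_const (lam * x), mul_zero, zero_add]
  have happ : gaussianReal (lam * x) (Real.toNNReal (1 - lam ^ 2)) (Ici h)
      = (gaussianReal 0 1) (Ici ((h - lam * x) / c)) := by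
    rw [hmap, Measure.map_apply (measurable_add_const (lam * x)) measurableSet_Ici]
    have h1 : (· + lam * x) ⁻¹' Ici h = Ici (h - lam * x) := by
      ext y; simp [mem_preimage, mem_Ici, le_sub_iff_add_le]
    rw [h1, Measure.map_apply (measurable_const_mul c) measurableSet_Ici]
    congr 1
    ext y
    simp only [mem_preimage, mem_Ici]
    rw [div_le_iff₀ hc]
    constructor <;> intro <;> linarith [mul_comm c y]
  rw [tailT, ← happ, gaussianReal_apply_eq_integral _ hv0,
    ENNReal.toReal_ofReal (integral_nonneg fun v => gaussianPDFReal_nonneg _ _ v)]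

lemma dens_eq {lam : ℝ} (hl0 : 0 < lam) (hl1 : lam < 1) (h x v : ℝ) :
    gaussianPDFReal 0 1 x * gaussianPDFReal (lam * x) (Real.toNNReal (1 - lam ^ 2)) v
      = (2 * π * Real.sqrt (1 - lam ^ 2))⁻¹ *
        (Real.exp (-(h ^ 2 / (1 + lam))) *
          (Real.exp (-(h / (1 + lam) * (x - h))) * Real.exp (-(h / (1 + lam) * (v - h))) *
            Real.exp (-(((x - h) ^ 2 - 2 * lam * (x - h) * (v - h) + (v - h) ^ 2) /
              (2 * (1 - lam ^ 2)))))) := by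
  have hc2 : (0:ℝ) < 1 - lam ^ 2 := by nlinarith
  have h1l : (0:ℝ) < 1 + lam := by linarith
  rw [gaussianPDFReal, gaussianPDFReal]
  rw [NNReal.coe_one, Real.coe_toNNReal _ hc2.le]
  rw [mul_mul_mul_comm, ← Real.exp_add, ← Real.exp_add, ← Real.exp_add, ← Real.exp_add]
  congr 1
  · rw [mul_one, ← mul_inv]
    congr 1
    rw [Real.sqrt_mul (by positivity : (0:ℝ) ≤ 2 * π) (1 - lam ^ 2), ← mul_assoc,
      Real.mul_self_sqrt (by positivity : (0:ℝ) ≤ 2 * π)]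
  · have hc2' := hc2.ne'
    have h1l' := h1l.ne'
    congr 1
    field_simp
    ring

lemma integrableOn_exp_shift {a : ℝ} (ha : 0 < a) (h : ℝ) :
    IntegrableOn (fun x => Real.exp (-(a * (x - h)))) (Ici h) := by
  rw [integrableOn_Ici_iff_integrableOn_Ioi]
  have : (fun x => Real.exp (-(a * (x - h)))) = fun x => Real.exp (a * h) * Real.exp (-a * x) := by
    ext x; rw [← Real.exp_add]; ring_nf
  rw [this]
  exact (exp_neg_integrableOn_Ioi h ha).const_mul _

lemma integral_exp_shift_Ici {a : ℝ} (ha : 0 < a) (h : ℝ) :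
    ∫ x in Ici h, Real.exp (-(a * (x - h))) = 1 / a := by
  rw [integral_Ici_eq_integral_Ioi]
  have : (fun x => Real.exp (-(a * (x - h)))) = fun x => Real.exp (a * h) * Real.exp (-(a * x)) := by
    ext x; rw [← Real.exp_add]; ring_nf
  rw [this, MeasureTheory.integral_const_mul]
  have h2 : ∫ x in Ioi h, Real.exp (-(a * x)) = a⁻¹ • ∫ x in Ioi (a * h), Real.exp (-x) :=
    integral_comp_mul_left_Ioi (fun u => Real.exp (-u)) h ha
  rw [h2, integral_exp_neg_Ioi, smul_eq_mul, Real.exp_neg]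
  rw [one_div]
  field_simp

lemma integral_exp_shift_Icc {a : ℝ} (ha : 0 < a) (h δ : ℝ) (hδ : 0 ≤ δ) :
    ∫ x in Icc h (h + δ), Real.exp (-(a * (x - h))) = (1 - Real.exp (-(a * δ))) / a := by
  rw [MeasureTheory.integral_Icc_eq_integral_Ioc,
    ← intervalIntegral.integral_of_le (by linarith : h ≤ h + δ)]
  have h1 : (∫ x in h..(h + δ), Real.exp (-(a * (x - h))))
      = ∫ x in h - h..(h + δ - h), Real.exp (-(a * x)) :=
    intervalIntegral.integral_comp_sub_right (fun u => Real.exp (-(a * u))) h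
  rw [h1]
  have h2 : h - h = 0 := by ring
  have h3 : h + δ - h = δ := by ring
  rw [h2, h3]
  have h4 : (∫ x in (0:ℝ)..δ, Real.exp (-(a * x)))
      = a⁻¹ • ∫ x in (a * 0)..(a * δ), Real.exp (-x) :=
    intervalIntegral.integral_comp_mul_left (fun u => Real.exp (-u)) ha.ne'
  rw [h4, mul_zero]
  have h5 : (∫ x in (0:ℝ)..(a * δ), Real.exp (-x))
      = ∫ x in (-(a * δ))..(-(0:ℝ)), Real.exp x :=
    intervalIntegral.integral_comp_neg fun u => Real.exp u
  rw [h5, integral_exp, smul_eq_mul]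
  rw [neg_zero, Real.exp_zero]
  field_simp

lemma dens_le {lam : ℝ} (hl0 : 0 < lam) (hl1 : lam < 1) {h x v : ℝ} (hx : h ≤ x) (hv : h ≤ v) :
    gaussianPDFReal 0 1 x * gaussianPDFReal (lam * x) (Real.toNNReal (1 - lam ^ 2)) v
      ≤ (2 * π * Real.sqrt (1 - lam ^ 2))⁻¹ * Real.exp (-(h ^ 2 / (1 + lam))) *
        (Real.exp (-(h / (1 + lam) * (x - h))) * Real.exp (-(h / (1 + lam) * (v - h)))) := by
  rw [dens_eq hl0 hl1 h x v]
  have hq : Real.exp (-(((x - h) ^ 2 - 2 * lam * (x - h) * (v - h) + (v - h) ^ 2) /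
      (2 * (1 - lam ^ 2)))) ≤ 1 := by
    rw [Real.exp_le_one_iff, neg_nonpos]
    apply div_nonneg ?_ (by nlinarith)
    nlinarith [sq_nonneg (x - h - (v - h)), mul_nonneg (sub_nonneg.2 hx) (sub_nonneg.2 hv)]
  have hco : (0:ℝ) ≤ (2 * π * Real.sqrt (1 - lam ^ 2))⁻¹ := by positivity
  calc (2 * π * Real.sqrt (1 - lam ^ 2))⁻¹ *
        (Real.exp (-(h ^ 2 / (1 + lam))) *
          (Real.exp (-(h / (1 + lam) * (x - h))) * Real.exp (-(h / (1 + lam) * (v - h))) *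
            Real.exp (-(((x - h) ^ 2 - 2 * lam * (x - h) * (v - h) + (v - h) ^ 2) /
              (2 * (1 - lam ^ 2))))))
      ≤ (2 * π * Real.sqrt (1 - lam ^ 2))⁻¹ *
        (Real.exp (-(h ^ 2 / (1 + lam))) *
          (Real.exp (-(h / (1 + lam) * (x - h))) * Real.exp (-(h / (1 + lam) * (v - h))) * 1)) := by
        gcongr
    _ = _ := by ring

lemma dens_ge {lam : ℝ} (hl0 : 0 < lam) (hl1 : lam < 1) {h x v δ : ℝ}
    (hx : x ∈ Icc h (h + δ)) (hv : v ∈ Icc h (h + δ)) :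
    (2 * π * Real.sqrt (1 - lam ^ 2))⁻¹ * Real.exp (-(h ^ 2 / (1 + lam))) *
        Real.exp (-(δ ^ 2 / (1 - lam ^ 2))) *
        (Real.exp (-(h / (1 + lam) * (x - h))) * Real.exp (-(h / (1 + lam) * (v - h))))
      ≤ gaussianPDFReal 0 1 x * gaussianPDFReal (lam * x) (Real.toNNReal (1 - lam ^ 2)) v := by
  rw [dens_eq hl0 hl1 h x v]
  have hc2 : (0:ℝ) < 1 - lam ^ 2 := by nlinarith
  have hq : Real.exp (-(δ ^ 2 / (1 - lam ^ 2)))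
      ≤ Real.exp (-(((x - h) ^ 2 - 2 * lam * (x - h) * (v - h) + (v - h) ^ 2) /
        (2 * (1 - lam ^ 2)))) := by
    apply Real.exp_le_exp.2
    rw [neg_le_neg_iff]
    obtain ⟨hx1, hx2⟩ := hx
    obtain ⟨hv1, hv2⟩ := hv
    have hqb : (x - h) ^ 2 - 2 * lam * (x - h) * (v - h) + (v - h) ^ 2 ≤ 2 * δ ^ 2 := by
      nlinarith [mul_nonneg (mul_nonneg hl0.le (sub_nonneg.2 hx1)) (sub_nonneg.2 hv1)]
    calc ((x - h) ^ 2 - 2 * lam * (x - h) * (v - h) + (v - h) ^ 2) / (2 * (1 - lam ^ 2))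
        ≤ (2 * δ ^ 2) / (2 * (1 - lam ^ 2)) := by
          apply div_le_div_of_nonneg_right hqb ?_ |>.trans_eq rfl
          positivity
      _ = δ ^ 2 / (1 - lam ^ 2) := by
          rw [mul_div_mul_left _ _ (two_ne_zero)]
  have hco : (0:ℝ) ≤ (2 * π * Real.sqrt (1 - lam ^ 2))⁻¹ := by positivity
  calc (2 * π * Real.sqrt (1 - lam ^ 2))⁻¹ * Real.exp (-(h ^ 2 / (1 + lam))) *
        Real.exp (-(δ ^ 2 / (1 - lam ^ 2))) *
        (Real.exp (-(h / (1 + lam) * (x - h))) * Real.exp (-(h / (1 + lam) * (v - h))))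
      = (2 * π * Real.sqrt (1 - lam ^ 2))⁻¹ *
        (Real.exp (-(h ^ 2 / (1 + lam))) *
          (Real.exp (-(h / (1 + lam) * (x - h))) * Real.exp (-(h / (1 + lam) * (v - h))) *
            Real.exp (-(δ ^ 2 / (1 - lam ^ 2))))) := by ring
    _ ≤ _ := by gcongr

def gApp (lam h : ℝ) : ℝ :=
  (1 + lam) ^ 2 / (2 * π * h ^ 2 * Real.sqrt (1 - lam ^ 2)) * Real.exp (-h ^ 2 / (1 + lam))

def lbFactor (lam h δ : ℝ) : ℝ :=
  Real.exp (-(δ ^ 2 / (1 - lam ^ 2))) * (1 - Real.exp (-(h / (1 + lam) * δ))) ^ 2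

lemma mu_le_gApp {lam h : ℝ} (hl0 : 0 < lam) (hl1 : lam < 1) (hh : 0 < h) :
    mu lam h ≤ gApp lam h := by
  have hc2 : (0:ℝ) < 1 - lam ^ 2 := by nlinarith
  have hcs : 0 < Real.sqrt (1 - lam ^ 2) := Real.sqrt_pos.2 hc2
  have h1l : (0:ℝ) < 1 + lam := by linarith
  have ha : 0 < h / (1 + lam) := div_pos hh h1l
  set a := h / (1 + lam) with hadef
  set C := (2 * π * Real.sqrt (1 - lam ^ 2))⁻¹ * Real.exp (-(h ^ 2 / (1 + lam))) with hCdef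
  have hC0 : 0 ≤ C := by positivity
  have stepA : ∀ x ∈ Ici h, gaussianPDFReal 0 1 x * tailT lam h x
      ≤ (C * (1 / a)) * Real.exp (-(a * (x - h))) := by
    intro x hx
    rw [tailT_eq_integral hl0 hl1]
    rw [← MeasureTheory.integral_const_mul]
    calc (∫ v in Ici h, gaussianPDFReal 0 1 x *
            gaussianPDFReal (lam * x) (Real.toNNReal (1 - lam ^ 2)) v)
        ≤ ∫ v in Ici h, (C * Real.exp (-(a * (x - h)))) * Real.exp (-(a * (v - h))) := by
          apply setIntegral_mono_on
          · exact ((integrable_gaussianPDFReal _ _).restrict).const_mul _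
          · exact ((integrableOn_exp_shift ha h).const_mul _)
          · exact measurableSet_Ici
          · intro v hv
            exact le_trans (dens_le hl0 hl1 hx hv) (le_of_eq (by rw [hCdef]; ring))
      _ = (C * Real.exp (-(a * (x - h)))) * (1 / a) := by
          rw [MeasureTheory.integral_const_mul, integral_exp_shift_Ici ha]
      _ = (C * (1 / a)) * Real.exp (-(a * (x - h))) := by ring
  rw [mu_eq_integral hl0 hl1 h]
  calc (∫ x in Ici h, gaussianPDFReal 0 1 x * tailT lam h x)
      ≤ ∫ x in Ici h, (C * (1 / a)) * Real.exp (-(a * (x - h))) := by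
        apply setIntegral_mono_on (integrableOn_pdf_mul_tailT hl0 h _)
          ((integrableOn_exp_shift ha h).const_mul _) measurableSet_Ici stepA
    _ = (C * (1 / a)) * (1 / a) := by
        rw [MeasureTheory.integral_const_mul, integral_exp_shift_Ici ha]
    _ = gApp lam h := by
        rw [hCdef, hadef, gApp, neg_div]
        field_simp

lemma gApp_lb {lam h δ : ℝ} (hl0 : 0 < lam) (hl1 : lam < 1) (hh : 0 < h) (hδ : 0 < δ) :
    gApp lam h * lbFactor lam h δ ≤ mu lam h := by
  have hc2 : (0:ℝ) < 1 - lam ^ 2 := by nlinarith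
  have hcs : 0 < Real.sqrt (1 - lam ^ 2) := Real.sqrt_pos.2 hc2
  have h1l : (0:ℝ) < 1 + lam := by linarith
  have ha : 0 < h / (1 + lam) := div_pos hh h1l
  set a := h / (1 + lam) with hadef
  set C' := (2 * π * Real.sqrt (1 - lam ^ 2))⁻¹ * Real.exp (-(h ^ 2 / (1 + lam))) *
    Real.exp (-(δ ^ 2 / (1 - lam ^ 2))) with hCdef
  have hC0 : 0 ≤ C' := by positivity
  have hIcc : Icc h (h + δ) ⊆ Ici h := Icc_subset_Ici_self
  have hexpint : ∀ b : ℝ, IntegrableOn (fun x => b * Real.exp (-(a * (x - h)))) (Icc h (h + δ)) :=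
    fun b => (Continuous.integrableOn_Icc (by continuity))
  have stepA : ∀ x ∈ Icc h (h + δ), (C' * ((1 - Real.exp (-(a * δ))) / a)) *
      Real.exp (-(a * (x - h))) ≤ gaussianPDFReal 0 1 x * tailT lam h x := by
    intro x hx
    have htail : (∫ v in Icc h (h + δ), gaussianPDFReal (lam * x) (Real.toNNReal (1 - lam ^ 2)) v)
        ≤ tailT lam h x := by
      rw [tailT_eq_integral hl0 hl1]
      apply setIntegral_mono_set ((integrable_gaussianPDFReal _ _).restrict)
        (ae_of_all _ fun v => gaussianPDFReal_nonneg _ _ v) (HasSubset.Subset.eventuallyLE hIcc)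
    calc (C' * ((1 - Real.exp (-(a * δ))) / a)) * Real.exp (-(a * (x - h)))
        = ∫ v in Icc h (h + δ), (C' * Real.exp (-(a * (x - h)))) * Real.exp (-(a * (v - h))) := by
          rw [MeasureTheory.integral_const_mul, integral_exp_shift_Icc ha h δ hδ.le]
          ring
      _ ≤ ∫ v in Icc h (h + δ), gaussianPDFReal 0 1 x *
            gaussianPDFReal (lam * x) (Real.toNNReal (1 - lam ^ 2)) v := by
          apply setIntegral_mono_on (hexpint (C' * Real.exp (-(a * (x - h)))))
            ((integrable_gaussianPDFReal _ _).restrict.const_mul _) measurableSet_Icc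
          intro v hv
          exact le_trans (le_of_eq (by rw [hCdef]; ring)) (dens_ge hl0 hl1 hx hv)
      _ = gaussianPDFReal 0 1 x *
            (∫ v in Icc h (h + δ), gaussianPDFReal (lam * x) (Real.toNNReal (1 - lam ^ 2)) v) := by
          rw [MeasureTheory.integral_const_mul]
      _ ≤ gaussianPDFReal 0 1 x * tailT lam h x :=
          mul_le_mul_of_nonneg_left htail (gaussianPDFReal_nonneg _ _ _)
  rw [mu_eq_integral hl0 hl1 h]
  calc gApp lam h * lbFactor lam h δ
      = (C' * ((1 - Real.exp (-(a * δ))) / a)) * ((1 - Real.exp (-(a * δ))) / a) := by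
        rw [hCdef, hadef, gApp, lbFactor, neg_div]
        field_simp
    _ = ∫ x in Icc h (h + δ), (C' * ((1 - Real.exp (-(a * δ))) / a)) *
          Real.exp (-(a * (x - h))) := by
        rw [MeasureTheory.integral_const_mul, integral_exp_shift_Icc ha h δ hδ.le]
    _ ≤ ∫ x in Icc h (h + δ), gaussianPDFReal 0 1 x * tailT lam h x := by
        apply setIntegral_mono_on (hexpint (C' * ((1 - Real.exp (-(a * δ))) / a)))
          ((integrableOn_pdf_mul_tailT hl0 h _)) measurableSet_Icc stepA
    _ ≤ ∫ x in Ici h, gaussianPDFReal 0 1 x * tailT lam h x := by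
        apply setIntegral_mono_set (integrableOn_pdf_mul_tailT hl0 h _)
          (ae_of_all _ fun x => mul_nonneg (gaussianPDFReal_nonneg _ _ _) (tailT_nonneg _ _ _))
          (HasSubset.Subset.eventuallyLE hIcc)

lemma gApp_pos {lam h : ℝ} (hl0 : 0 < lam) (hl1 : lam < 1) (hh : 0 < h) : 0 < gApp lam h := by
  have hc2 : (0:ℝ) < 1 - lam ^ 2 := by nlinarith
  have hcs : 0 < Real.sqrt (1 - lam ^ 2) := Real.sqrt_pos.2 hc2
  have h1l : (0:ℝ) < 1 + lam := by linarith
  rw [gApp]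
  exact mul_pos (div_pos (by positivity) (by positivity)) (Real.exp_pos _)

lemma lbFactor_pos {lam h δ : ℝ} (hl0 : 0 < lam) (hl1 : lam < 1) (hh : 0 < h) (hδ : 0 < δ) :
    0 < lbFactor lam h δ := by
  have h1l : (0:ℝ) < 1 + lam := by linarith
  have : Real.exp (-(h / (1 + lam) * δ)) < 1 := by
    rw [Real.exp_lt_one_iff, neg_lt_zero]
    positivity
  rw [lbFactor]
  exact mul_pos (Real.exp_pos _) (pow_pos (by linarith) 2)

lemma mu_pos {lam h : ℝ} (hl0 : 0 < lam) (hl1 : lam < 1) (hh : 0 < h) : 0 < mu lam h :=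
  lt_of_lt_of_le (mul_pos (gApp_pos hl0 hl1 hh) (lbFactor_pos hl0 hl1 hh one_pos))
    (gApp_lb hl0 hl1 hh one_pos)

lemma tendsto_sqrt_atTop : Tendsto Real.sqrt atTop atTop := by
  apply Tendsto.congr' ?_ (tendsto_rpow_atTop (by norm_num : (0:ℝ) < 1/2))
  filter_upwards with x
  rw [Real.sqrt_eq_rpow]

lemma hthr_tendsto {r : ℝ} (hr : 0 < r) : Tendsto (fun m : ℕ => hthr r m) atTop atTop := by
  apply _root_.tendsto_sqrt_atTop.comp
  apply Tendsto.const_mul_atTop (by positivity : (0:ℝ) < 2 * r)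
  exact Real.tendsto_log_atTop.comp tendsto_natCast_atTop_atTop

lemma ratio_tendsto_one {r : ℝ} (hr0 : 0 < r) (lamSeq : ℕ → ℝ) (lamL : ℝ)
    (hlim : Tendsto lamSeq atTop (𝓝 lamL)) (hL0 : 0 < lamL) (hL1 : lamL < 1)
    (hmem : ∀ᶠ m in atTop, 0 < lamSeq m ∧ lamSeq m < 1) :
    Tendsto (fun m => mu (lamSeq m) (hthr r m) / gApp (lamSeq m) (hthr r m)) atTop (𝓝 1) := by
  have hth : Tendsto (fun m : ℕ => hthr r m) atTop atTop := hthr_tendsto hr0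
  have hpos : ∀ᶠ m in atTop, 0 < hthr r m := hth.eventually_gt_atTop 0
  set δ : ℕ → ℝ := fun m => 1 / Real.sqrt (hthr r m) with hδdef
  have hδpos : ∀ᶠ m in atTop, 0 < δ m := by
    filter_upwards [hpos] with m hm
    simp only [hδdef]
    positivity
  have hδ0 : Tendsto δ atTop (𝓝 0) :=
    Tendsto.div_atTop tendsto_const_nhds (_root_.tendsto_sqrt_atTop.comp hth)
  -- limit of the lower factor
  have h1lam : Tendsto (fun m => 1 + lamSeq m) atTop (𝓝 (1 + lamL)) :=
    tendsto_const_nhds.add hlim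
  have hfac1 : Tendsto (fun m => Real.exp (-(δ m ^ 2 / (1 - lamSeq m ^ 2)))) atTop (𝓝 1) := by
    have hnum : Tendsto (fun m => δ m ^ 2) atTop (𝓝 0) := by
      simpa using hδ0.pow 2
    have h1 : Tendsto (fun m => δ m ^ 2 / (1 - lamSeq m ^ 2)) atTop (𝓝 (0 / (1 - lamL ^ 2))) :=
      hnum.div (tendsto_const_nhds.sub (hlim.pow 2)) (by nlinarith)
    rw [zero_div] at h1
    have h2 := h1.neg
    rw [neg_zero] at h2
    simpa [Real.exp_zero, Function.comp_def] using (Real.continuous_exp.tendsto 0).comp h2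
  have hfac2 : Tendsto (fun m => (1 - Real.exp (-(hthr r m / (1 + lamSeq m) * δ m))) ^ 2)
      atTop (𝓝 1) := by
    have hinner : Tendsto (fun m => hthr r m / (1 + lamSeq m) * δ m) atTop atTop := by
      have heq : ∀ᶠ m in atTop, Real.sqrt (hthr r m) * (1 / (1 + lamSeq m))
          = hthr r m / (1 + lamSeq m) * δ m := by
        filter_upwards [hpos, hmem] with m hm hmem2
        have h1l : (0:ℝ) < 1 + lamSeq m := by linarith [hmem2.1]
        set s := Real.sqrt (hthr r m) with hsdef
        have hs : 0 < s := Real.sqrt_pos.2 hm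
        have hss : hthr r m = s * s := (Real.mul_self_sqrt hm.le).symm
        rw [hδdef]
        simp only
        rw [hss]
        field_simp
        ring_nf
        exact Real.sqrt_sq hs.le
      apply Tendsto.congr' heq
      apply Filter.Tendsto.atTop_mul_pos (C := 1 / (1 + lamL)) (by positivity)
        (_root_.tendsto_sqrt_atTop.comp hth)
      exact tendsto_const_nhds.div h1lam (by positivity)
    have h2 : Tendsto (fun m => Real.exp (-(hthr r m / (1 + lamSeq m) * δ m))) atTop (𝓝 0) :=
      Real.tendsto_exp_neg_atTop_nhds_zero.comp hinner
    have h3 := ((tendsto_const_nhds (x := (1:ℝ))).sub h2).pow 2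
    simpa using h3
  have hlb : Tendsto (fun m => lbFactor (lamSeq m) (hthr r m) (δ m)) atTop (𝓝 1) := by
    have := hfac1.mul hfac2
    simpa [lbFactor] using this
  -- squeeze
  apply tendsto_of_tendsto_of_tendsto_of_le_of_le' hlb tendsto_const_nhds
  · filter_upwards [hpos, hmem, hδpos] with m hm ⟨h0, h1⟩ hd
    rw [le_div_iff₀ (gApp_pos h0 h1 hm)]
    exact le_trans (le_of_eq (mul_comm _ _)) (gApp_lb h0 h1 hm hd)
  · filter_upwards [hpos, hmem] with m hm ⟨h0, h1⟩
    rw [div_le_one (gApp_pos h0 h1 hm)]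
    exact mu_le_gApp h0 h1 hm

section Eps

variable {r lam eta : ℝ}

lemma eps_tendsto_zero (hr0 : 0 < r) (hl1 : lam < 1) (hlam : 2 * r - 1 < lam) (hl0 : 0 < lam)
    (heta : 0 < eta) :
    Tendsto (fun m : ℕ => epsm r lam eta m) atTop (𝓝 0) := by
  have hp : 0 < (lam - (2 * r - 1)) / (2 * (1 + lam)) := by
    apply div_pos (by linarith) (by linarith)
  have h1 : Tendsto (fun m : ℕ => Real.sqrt (2 * Real.pi) * (1 + lam) *
      (1 - lam ^ 2) ^ ((1:ℝ) / 4) * eta / Real.sqrt (2 * r * Real.log m)) atTop (𝓝 0) :=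
    Tendsto.div_atTop tendsto_const_nhds (hthr_tendsto hr0)
  have h2 : Tendsto (fun m : ℕ => (m : ℝ) ^ (-(lam - (2 * r - 1)) / (2 * (1 + lam))))
      atTop (𝓝 0) := by
    have := (tendsto_rpow_neg_atTop hp).comp (tendsto_natCast_atTop_atTop (R := ℝ))
    apply this.congr
    intro m
    simp only [Function.comp_apply, neg_div]
  have h3 := h1.mul h2
  rw [mul_zero] at h3
  unfold epsm
  exact h3

lemma hthr_mul_rpow_tendsto_zero (hr0 : 0 < r) {p : ℝ} (hp : 0 < p) :
    Tendsto (fun m : ℕ => hthr r m * (m : ℝ) ^ (-p)) atTop (𝓝 0) := by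
  have hev : ∀ᶠ m : ℕ in atTop, Real.log m ≤ (m : ℝ) ^ p := by
    have h := (isLittleO_log_rpow_atTop hp).bound one_pos
    have h2 := (tendsto_natCast_atTop_atTop (R := ℝ)).eventually h
    filter_upwards [h2, eventually_ge_atTop 1] with m hm hm1
    have hm1' : (1:ℝ) ≤ (m:ℝ) := by exact_mod_cast hm1
    have hlog : 0 ≤ Real.log m := Real.log_nonneg hm1'
    calc Real.log m = ‖Real.log (m:ℝ)‖ := by rw [Real.norm_eq_abs, abs_of_nonneg hlog]
      _ ≤ 1 * ‖(m:ℝ) ^ p‖ := hm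
      _ = (m:ℝ) ^ p := by
          rw [one_mul, Real.norm_eq_abs, abs_of_nonneg (Real.rpow_nonneg (by linarith) p)]
  have hub : ∀ᶠ m : ℕ in atTop, hthr r m * (m : ℝ) ^ (-p)
      ≤ Real.sqrt (2 * r) * (m : ℝ) ^ (-(p / 2)) := by
    filter_upwards [hev, eventually_ge_atTop 1] with m hm hm1
    have hm1' : (1:ℝ) ≤ (m:ℝ) := by exact_mod_cast hm1
    have hm0 : (0:ℝ) < (m:ℝ) := by linarith
    calc hthr r m * (m : ℝ) ^ (-p)
        ≤ Real.sqrt (2 * r * (m:ℝ) ^ p) * (m : ℝ) ^ (-p) := by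
          apply mul_le_mul_of_nonneg_right ?_ (Real.rpow_nonneg hm0.le _)
          apply Real.sqrt_le_sqrt
          apply mul_le_mul_of_nonneg_left hm (by positivity)
      _ = Real.sqrt (2 * r) * ((m:ℝ) ^ p) ^ ((1:ℝ)/2) * (m : ℝ) ^ (-p) := by
          rw [Real.sqrt_mul (by positivity), Real.sqrt_eq_rpow ((m:ℝ) ^ p)]
      _ = Real.sqrt (2 * r) * (m : ℝ) ^ (-(p / 2)) := by
          rw [← Real.rpow_mul hm0.le, mul_assoc, ← Real.rpow_add hm0]
          congr 1
          ring
  have hrhs : Tendsto (fun m : ℕ => Real.sqrt (2 * r) * (m : ℝ) ^ (-(p / 2))) atTop (𝓝 0) := by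
    have := (tendsto_rpow_neg_atTop (half_pos hp)).comp (tendsto_natCast_atTop_atTop (R := ℝ))
    simpa using tendsto_const_nhds.mul this
  apply tendsto_of_tendsto_of_tendsto_of_le_of_le' tendsto_const_nhds hrhs
  · filter_upwards with m
    exact mul_nonneg (Real.sqrt_nonneg _) (Real.rpow_nonneg (Nat.cast_nonneg m) _)
  · exact hub

lemma h2_eps_tendsto_zero (hr0 : 0 < r) (hl1 : lam < 1) (hlam : 2 * r - 1 < lam) (hl0 : 0 < lam)
    (heta : 0 < eta) :
    Tendsto (fun m : ℕ => (hthr r m) ^ 2 * epsm r lam eta m) atTop (𝓝 0) := by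
  have hp : 0 < (lam - (2 * r - 1)) / (2 * (1 + lam)) := div_pos (by linarith) (by linarith)
  set K := Real.sqrt (2 * Real.pi) * (1 + lam) * (1 - lam ^ 2) ^ ((1:ℝ) / 4) * eta with hK
  set p := (lam - (2 * r - 1)) / (2 * (1 + lam)) with hpdef
  have hcore := hthr_mul_rpow_tendsto_zero hr0 hp
  have heq : ∀ᶠ m : ℕ in atTop, K * (hthr r m * (m:ℝ) ^ (-p))
      = (hthr r m) ^ 2 * epsm r lam eta m := by
    filter_upwards [(hthr_tendsto hr0).eventually_gt_atTop 0] with m hm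
    rw [epsm, ← hK]
    have hh : Real.sqrt (2 * r * Real.log m) = hthr r m := rfl
    rw [hh, neg_div, ← hpdef]
    have h2 : hthr r m ^ 2 = hthr r m * hthr r m := sq (hthr r m) ▸ by ring
    field_simp
  have h4 := (tendsto_const_nhds (x := K)).mul hcore
  rw [mul_zero] at h4
  exact Tendsto.congr' heq h4

lemma eps_eventually_pos (hr0 : 0 < r) (hl1 : lam < 1) (hl0 : 0 < lam) (heta : 0 < eta) :
    ∀ᶠ m : ℕ in atTop, 0 < epsm r lam eta m := by
  filter_upwards [(hthr_tendsto hr0).eventually_gt_atTop 0, eventually_ge_atTop 1] with m hm hm1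
  have hm0 : (0:ℝ) < (m:ℝ) := by exact_mod_cast Nat.lt_of_lt_of_le Nat.zero_lt_one hm1
  have hc2 : (0:ℝ) < 1 - lam ^ 2 := by nlinarith
  rw [epsm]
  have hh : Real.sqrt (2 * r * Real.log m) = hthr r m := rfl
  rw [hh]
  apply mul_pos (div_pos ?_ hm) (Real.rpow_pos_of_pos hm0 _)
  have h1l : (0:ℝ) < 1 + lam := by linarith
  positivity

lemma gApp_ratio_tendsto (hr0 : 0 < r) (hl0 : 0 < lam) (hl1 : lam < 1)
    (hlam : 2 * r - 1 < lam) (heta : 0 < eta) :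
    Tendsto (fun m : ℕ => gApp (lam - epsm r lam eta m) (hthr r m) / gApp lam (hthr r m))
      atTop (𝓝 1) := by
  set eps := fun m : ℕ => epsm r lam eta m with hepsdef
  have heps0 : Tendsto eps atTop (𝓝 0) := eps_tendsto_zero hr0 hl1 hlam hl0 heta
  have hh2eps : Tendsto (fun m : ℕ => (hthr r m) ^ 2 * eps m) atTop (𝓝 0) :=
    h2_eps_tendsto_zero hr0 hl1 hlam hl0 heta
  have hmem : ∀ᶠ m : ℕ in atTop, 0 < lam - eps m ∧ lam - eps m < 1 := by
    filter_upwards [heps0.eventually (eventually_lt_nhds hl0),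
      heps0.eventually (eventually_gt_nhds (by linarith : lam - 1 < (0:ℝ)))] with m h1 h2
    constructor <;> [linarith; linarith]
  have hpos : ∀ᶠ m : ℕ in atTop, 0 < hthr r m := (hthr_tendsto hr0).eventually_gt_atTop 0
  have h1lam : (0:ℝ) < 1 + lam := by linarith
  set A := fun m : ℕ => ((1 + (lam - eps m)) ^ 2 * Real.sqrt (1 - lam ^ 2)) /
      ((1 + lam) ^ 2 * Real.sqrt (1 - (lam - eps m) ^ 2)) with hA
  set E := fun m : ℕ => Real.exp (-((hthr r m) ^ 2 * eps m / ((1 + lam) * (1 + (lam - eps m)))))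
    with hE
  have heq : ∀ᶠ m : ℕ in atTop, A m * E m
      = gApp (lam - eps m) (hthr r m) / gApp lam (hthr r m) := by
    filter_upwards [hmem, hpos] with m hm hh
    obtain ⟨hm0, hm1⟩ := hm
    have h1l' : (0:ℝ) < 1 + (lam - eps m) := by linarith
    have hc2 : (0:ℝ) < 1 - lam ^ 2 := by nlinarith
    have hc2' : (0:ℝ) < 1 - (lam - eps m) ^ 2 := by nlinarith
    have hcs : 0 < Real.sqrt (1 - lam ^ 2) := Real.sqrt_pos.2 hc2
    have hcs' : 0 < Real.sqrt (1 - (lam - eps m) ^ 2) := Real.sqrt_pos.2 hc2'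
    have e1 : Real.exp (-(hthr r m) ^ 2 / (1 + (lam - eps m)))
        = E m * Real.exp (-(hthr r m) ^ 2 / (1 + lam)) := by
      rw [hE, ← Real.exp_add]
      congr 1
      field_simp
      ring
    rw [gApp, gApp, e1, hA]
    have hhne : hthr r m ≠ 0 := ne_of_gt hh
    have hpi : (π:ℝ) ≠ 0 := Real.pi_ne_zero
    field_simp
  apply Tendsto.congr' heq
  have hAlim : Tendsto A atTop (𝓝 1) := by
    have hlam' : Tendsto (fun m => lam - eps m) atTop (𝓝 lam) := by
      simpa using (tendsto_const_nhds (x := lam)).sub heps0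
    have hnum : Tendsto (fun m => (1 + (lam - eps m)) ^ 2 * Real.sqrt (1 - lam ^ 2))
        atTop (𝓝 ((1 + lam) ^ 2 * Real.sqrt (1 - lam ^ 2))) :=
      (((tendsto_const_nhds (x := (1:ℝ))).add hlam').pow 2).mul tendsto_const_nhds
    have hden : Tendsto (fun m => (1 + lam) ^ 2 * Real.sqrt (1 - (lam - eps m) ^ 2))
        atTop (𝓝 ((1 + lam) ^ 2 * Real.sqrt (1 - lam ^ 2))) := by
      apply (tendsto_const_nhds (x := (1 + lam) ^ 2)).mul
      exact (Real.continuous_sqrt.tendsto _).comp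
        ((tendsto_const_nhds (x := (1:ℝ))).sub (hlam'.pow 2))
    have hc2 : (0:ℝ) < 1 - lam ^ 2 := by nlinarith
    have hne : ((1 + lam) ^ 2 * Real.sqrt (1 - lam ^ 2)) ≠ 0 := by positivity
    have := hnum.div hden hne
    rwa [div_self hne] at this
  have hElim : Tendsto E atTop (𝓝 1) := by
    have hden : Tendsto (fun m => (1 + lam) * (1 + (lam - eps m))) atTop
        (𝓝 ((1 + lam) * (1 + lam))) := by
      apply (tendsto_const_nhds (x := (1 + lam))).mul
      simpa using ((tendsto_const_nhds (x := (1:ℝ))).add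
        ((tendsto_const_nhds (x := lam)).sub heps0))
    have hexp : Tendsto (fun m => (hthr r m) ^ 2 * eps m / ((1 + lam) * (1 + (lam - eps m))))
        atTop (𝓝 (0 / ((1 + lam) * (1 + lam)))) :=
      hh2eps.div hden (by positivity)
    rw [zero_div] at hexp
    have h2 := hexp.neg
    rw [neg_zero] at h2
    simpa [Real.exp_zero, Function.comp_def] using (Real.continuous_exp.tendsto 0).comp h2
  simpa using hAlim.mul hElim

lemma mu_le_one (lam h : ℝ) : mu lam h ≤ 1 := by
  have hf : Measurable (fun z : ℝ × ℝ => (z.1, lam * z.1 + Real.sqrt (1 - lam ^ 2) * z.2)) :=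
    measurable_fst.prodMk ((measurable_fst.const_mul lam).add (measurable_snd.const_mul _))
  have : IsProbabilityMeasure (gaussPair lam) := by
    rw [gaussPair]
    exact Measure.isProbabilityMeasure_map hf.aemeasurable
  rw [mu]
  exact ENNReal.toReal_le_of_le_ofReal zero_le_one (by simpa using prob_le_one)

end Eps


end AuxStmt19

open Set Real in
/-- asymptotic equivalences for `μ_m(λ - ε_m)` and `σ_m(λ - ε_m)`. -/
theorem stmt19 (r : ℝ) (hr : r ∈ Set.Ioo (0 : ℝ) 1)
    (lam : ℝ) (hlam : lam ∈ Set.Ioo (2 * r - 1) 1) (hlam0 : 0 < lam)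
    (eta : ℝ) (heta : 0 < eta) :
    Asymptotics.IsEquivalent atTop
      (fun m : ℕ => muM r m (lam - epsm r lam eta m))
      (fun m : ℕ => muM r m lam) ∧
    Asymptotics.IsEquivalent atTop
      (fun m : ℕ => sigM r m (lam - epsm r lam eta m))
      (fun m : ℕ => Real.sqrt (muM r m lam)) ∧
    Asymptotics.IsEquivalent atTop
      (fun m : ℕ => Real.sqrt (muM r m lam))
      (fun m : ℕ => Real.sqrt ((1 + lam) ^ 2 /
          (2 * Real.pi * (hthr r m) ^ 2 * Real.sqrt (1 - lam ^ 2)) *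
        Real.exp (-(hthr r m) ^ 2 / (1 + lam)))) := by

  obtain ⟨hr0, hr1⟩ := hr
  obtain ⟨hlam1, hlam2⟩ := hlam
  set eps := fun m : ℕ => epsm r lam eta m with hepsdef
  have hth : Tendsto (fun m : ℕ => hthr r m) atTop atTop := hthr_tendsto hr0
  have hpos : ∀ᶠ m : ℕ in atTop, 0 < hthr r m := hth.eventually_gt_atTop 0
  have heps0 : Tendsto eps atTop (𝓝 0) := eps_tendsto_zero hr0 hlam2 hlam1 hlam0 heta
  have hmem : ∀ᶠ m : ℕ in atTop, 0 < lam - eps m ∧ lam - eps m < 1 := by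
    filter_upwards [heps0.eventually (eventually_lt_nhds hlam0),
      heps0.eventually (eventually_gt_nhds (by linarith : lam - 1 < (0:ℝ)))] with m h1 h2
    constructor <;> [linarith; linarith]
  have hlim' : Tendsto (fun m => lam - eps m) atTop (𝓝 lam) := by
    simpa using (tendsto_const_nhds (x := lam)).sub heps0
  have hA : Tendsto (fun m => mu (lam - eps m) (hthr r m) / gApp (lam - eps m) (hthr r m))
      atTop (𝓝 1) := ratio_tendsto_one hr0 _ lam hlim' hlam0 hlam2 hmem
  have hB : Tendsto (fun m => mu lam (hthr r m) / gApp lam (hthr r m)) atTop (𝓝 1) :=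
    ratio_tendsto_one hr0 (fun _ => lam) lam tendsto_const_nhds hlam0 hlam2
      (Eventually.of_forall fun _ => ⟨hlam0, hlam2⟩)
  have hC : Tendsto (fun m : ℕ => gApp (lam - eps m) (hthr r m) / gApp lam (hthr r m))
      atTop (𝓝 1) := gApp_ratio_tendsto hr0 hlam0 hlam2 hlam1 heta
  have hmupos : ∀ᶠ m : ℕ in atTop, 0 < mu lam (hthr r m) := by
    filter_upwards [hpos] with m hm
    exact mu_pos hlam0 hlam2 hm
  have hmupos' : ∀ᶠ m : ℕ in atTop, 0 < mu (lam - eps m) (hthr r m) := by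
    filter_upwards [hpos, hmem] with m hm ⟨h0, h1⟩
    exact mu_pos h0 h1 hm
  have hgpos : ∀ᶠ m : ℕ in atTop, 0 < gApp lam (hthr r m) := by
    filter_upwards [hpos] with m hm
    exact gApp_pos hlam0 hlam2 hm
  have hgpos' : ∀ᶠ m : ℕ in atTop, 0 < gApp (lam - eps m) (hthr r m) := by
    filter_upwards [hpos, hmem] with m hm ⟨h0, h1⟩
    exact gApp_pos h0 h1 hm
  have hBinv : Tendsto (fun m => gApp lam (hthr r m) / mu lam (hthr r m)) atTop (𝓝 1) := by
    have h1 := hB.inv₀ one_ne_zero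
    rw [inv_one] at h1
    apply h1.congr
    intro m
    rw [inv_div]
  have T1 : Tendsto (fun m => mu (lam - eps m) (hthr r m) / mu lam (hthr r m)) atTop (𝓝 1) := by
    have hprod := (hA.mul hC).mul hBinv
    rw [show ((1:ℝ) * 1) * 1 = 1 by norm_num] at hprod
    apply Tendsto.congr' ?_ hprod
    filter_upwards [hmupos, hgpos, hgpos'] with m h1 h2 h3
    field_simp
  have hmu'0 : Tendsto (fun m => mu (lam - eps m) (hthr r m)) atTop (𝓝 0) := by
    have hc2 : (0:ℝ) < 1 - lam ^ 2 := by nlinarith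
    have hub : ∀ᶠ m : ℕ in atTop, mu (lam - eps m) (hthr r m)
        ≤ (4 / (2 * Real.pi * Real.sqrt (1 - lam ^ 2))) * (1 / (hthr r m) ^ 2) := by
      filter_upwards [hpos, hmem, eps_eventually_pos hr0 hlam2 hlam0 heta] with m hm hmm hep
      obtain ⟨h0, h1⟩ := hmm
      have hc2' : (0:ℝ) < 1 - (lam - eps m) ^ 2 := by nlinarith
      have he2 : (1 + (lam - eps m)) ^ 2 ≤ 4 := by nlinarith
      have he3 : Real.sqrt (1 - lam ^ 2) ≤ Real.sqrt (1 - (lam - eps m) ^ 2) := by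
        apply Real.sqrt_le_sqrt
        nlinarith
      calc mu (lam - eps m) (hthr r m) ≤ gApp (lam - eps m) (hthr r m) :=
            mu_le_gApp h0 h1 hm
        _ ≤ (1 + (lam - eps m)) ^ 2 /
              (2 * Real.pi * (hthr r m) ^ 2 * Real.sqrt (1 - (lam - eps m) ^ 2)) := by
            rw [gApp]
            apply mul_le_of_le_one_right (by positivity)
            rw [Real.exp_le_one_iff, neg_div, neg_nonpos]
            positivity
        _ ≤ 4 / (2 * Real.pi * (hthr r m) ^ 2 * Real.sqrt (1 - lam ^ 2)) := by
            apply div_le_div₀ (by norm_num) he2 (by positivity)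
            apply mul_le_mul_of_nonneg_left he3 (by positivity)
        _ = (4 / (2 * Real.pi * Real.sqrt (1 - lam ^ 2))) * (1 / (hthr r m) ^ 2) := by
            field_simp
    have hBnd : Tendsto (fun m : ℕ => (4 / (2 * Real.pi * Real.sqrt (1 - lam ^ 2))) *
        (1 / (hthr r m) ^ 2)) atTop (𝓝 0) := by
      have hp2 : Tendsto (fun m : ℕ => (hthr r m) ^ 2) atTop atTop :=
        (tendsto_pow_atTop two_ne_zero).comp hth
      have := (tendsto_const_nhds (x := (4 / (2 * Real.pi * Real.sqrt (1 - lam ^ 2))))).mul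
        (Tendsto.div_atTop (tendsto_const_nhds (x := (1:ℝ))) hp2)
      simpa using this
    apply tendsto_of_tendsto_of_tendsto_of_le_of_le' tendsto_const_nhds hBnd
    · exact Eventually.of_forall fun m => ENNReal.toReal_nonneg
    · exact hub
  -- part 1
  have part1 : Asymptotics.IsEquivalent atTop
      (fun m : ℕ => muM r m (lam - epsm r lam eta m)) (fun m : ℕ => muM r m lam) := by
    rw [Asymptotics.isEquivalent_iff_tendsto_one ?_]
    · exact T1
    · filter_upwards [hmupos] with m hm
      exact ne_of_gt hm
  -- part 3
  have T3 : Tendsto (fun m => Real.sqrt (mu lam (hthr r m)) /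
      Real.sqrt (gApp lam (hthr r m))) atTop (𝓝 1) := by
    have hs := (Real.continuous_sqrt.tendsto 1).comp hB
    rw [Real.sqrt_one] at hs
    apply Tendsto.congr ?_ hs
    intro m
    exact Real.sqrt_div ENNReal.toReal_nonneg _
  have part3 : Asymptotics.IsEquivalent atTop
      (fun m : ℕ => Real.sqrt (muM r m lam))
      (fun m : ℕ => Real.sqrt (gApp lam (hthr r m))) := by
    rw [Asymptotics.isEquivalent_iff_tendsto_one ?_]
    · exact T3
    · filter_upwards [hgpos] with m hm
      exact ne_of_gt (Real.sqrt_pos.2 hm)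
  -- part 2
  have T2inner : Tendsto (fun m => (mu (lam - eps m) (hthr r m) / mu lam (hthr r m)) *
      (1 - mu (lam - eps m) (hthr r m))) atTop (𝓝 1) := by
    have := T1.mul ((tendsto_const_nhds (x := (1:ℝ))).sub hmu'0)
    simpa using this
  have T2 : Tendsto (fun m => sigma' (lam - eps m) (hthr r m) /
      Real.sqrt (mu lam (hthr r m))) atTop (𝓝 1) := by
    have hs := (Real.continuous_sqrt.tendsto 1).comp T2inner
    rw [Real.sqrt_one] at hs
    apply Tendsto.congr' ?_ hs
    filter_upwards [hmupos] with m hm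
    simp only [Function.comp_apply]
    rw [sigma', ← mul_div_right_comm, Real.sqrt_div (mul_nonneg (mu_nonneg _ _)
      (by linarith [mu_le_one (lam - eps m) (hthr r m)])) _]
  have part2 : Asymptotics.IsEquivalent atTop
      (fun m : ℕ => sigM r m (lam - epsm r lam eta m))
      (fun m : ℕ => Real.sqrt (muM r m lam)) := by
    rw [Asymptotics.isEquivalent_iff_tendsto_one ?_]
    · exact T2
    · filter_upwards [hmupos] with m hm
      exact ne_of_gt (Real.sqrt_pos.2 hm)
  exact ⟨part1, part2, part3⟩


end
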